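/- Let Γ₁ be a group, let Γ₀ and Γ₀′ be two subgroups of Γ₁ at least one of which is a proper subgroup of Γ₁, let φ : Γ₀ → Γ₀′ be an isomorphism, and let Γ be the corresponding HNN extension of Γ₁ over φ. Assume that every finitely generated subgroup of Γ₀ which is nontrivial (not reduced to the identity) and whose image in Γ (under the canonical embedding Γ₁ → Γ) is normal in Γ, is ICC. Then Γ is ICC. -/

import Mathlib

/-- A group is ICC ("à classes de conjugaison infinies") if it is infinite and
the conjugacy class of every element `g ≠ 1` is infinite. -/
def IsICC (G : Type*) [Group G] : Prop :=
  Infinite G ∧ ∀ g : G, g ≠ 1 → (conjugatesOf g).Infinite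

/-!
Britton's lemma does all the work. Let `S` be a proper associated subgroup, say the one
conjugated by `t ^ u`, and `b ∉ S`. An element outside the base group is conjugate to a reduced
word `y = t ^ ε₁ * g₁ * ⋯ * t ^ εₗ * gₗ`. For a suitable `β` (either `b`, or `b⁻¹ * gₗ` after
possibly rotating the last letter of `y` to the front) the conjugates of `y` by `β * (t ^ u * β) ^ n` are
represented by reduced words of length `2 * n + ℓ`, hence are pairwise distinct. So every element
with a finite conjugacy class lies in the base group; in particular `t` has infinitely many
conjugates and the HNN extension is infinite.

If `g ≠ 1` had finitely many conjugates, its normal closure `N` would be generated by them, hence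
finitely generated, and contained in the base group, even in `Γ₀` because `t * a * t⁻¹` lies in
the base group only if `a ∈ Γ₀`. By hypothesis `N` is then ICC, so `g` already has infinitely
many conjugates inside `N`.
-/

section FiniteConjugacyClasses

variable {G : Type*} [Group G]

variable (G) in
def fcCenter : Subgroup G where
  carrier := {x | (conjugatesOf x).Finite}
  one_mem' := by simp [conjugatesOf]
  mul_mem' {a b} ha hb := (ha.image2 (· * ·) hb).subset fun _ hc => by
    obtain ⟨c, rfl⟩ := isConj_iff.1 hc
    exact ⟨_, isConj_iff.2 ⟨c, rfl⟩, _, isConj_iff.2 ⟨c, rfl⟩, by group⟩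
  inv_mem' {a} ha := (ha.image (·⁻¹)).subset fun _ hc => by
    obtain ⟨c, rfl⟩ := isConj_iff.1 hc
    exact ⟨_, isConj_iff.2 ⟨c, rfl⟩, by group⟩

theorem mem_fcCenter {x : G} : x ∈ fcCenter G ↔ (conjugatesOf x).Finite := Iff.rfl

variable (G) in
instance fcCenter.normal : (fcCenter G).Normal where
  conj_mem x hx c := by
    rwa [mem_fcCenter, ← (isConj_iff.2 ⟨c, rfl⟩ : IsConj x _).conjugatesOf_eq]

theorem Subgroup.FG.normalClosure_singleton {g : G} (hg : (conjugatesOf g).Finite) :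
    (Subgroup.normalClosure {g}).FG :=
  (Subgroup.fg_iff _).2
    ⟨conjugatesOf g, by simp [Subgroup.normalClosure, Group.conjugatesOfSet], hg⟩

theorem Subgroup.FG.of_map_of_injective {K : Type*} [Group K] {f : G →* K}
    (hf : Function.Injective f) {H : Subgroup G} (h : (H.map f).FG) : H.FG := by
  rw [Subgroup.fg_iff_submonoid_fg] at h ⊢
  exact Submonoid.FG.map_injective f hf h

theorem Set.Infinite.conjugatesOf_map {K : Type*} [Group K] {f : G →* K}
    (hf : Function.Injective f) {g : G} (hg : (conjugatesOf g).Infinite) :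
    (conjugatesOf (f g)).Infinite :=
  (hg.image hf.injOn).mono <| by
    rintro _ ⟨x, hx, rfl⟩
    exact f.map_isConj hx

end FiniteConjugacyClasses

theorem List.isChain_replicate_append {α : Type*} {R : α → α → Prop} {p : α} {l : List α}
    (hp : R p p) (h : (p :: l).IsChain R) (n : ℕ) : (replicate n p ++ l).IsChain R := by
  suffices ∀ n, (p :: (replicate n p ++ l)).IsChain R from (this n).tail
  intro n
  induction n with
  | zero => exact h
  | succ n ih => exact ih.cons_cons hp

theorem List.isChain_append_cons_replicate {α : Type*} {R : α → α → Prop} {p q : α}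
    {l : List α} (hp : R p p) (hqp : R q p) (h : (l ++ [q]).IsChain R) (n : ℕ) :
    (l ++ q :: replicate n p).IsChain R := by
  rw [← singleton_append, ← append_assoc]
  refine isChain_append.2 ⟨h, isChain_replicate_of_rel n hp, fun a ha b hb => ?_⟩
  simp_all [head?_replicate]

namespace HNNExtension

open NormalWord

variable {G : Type*} [Group G] {A B : Subgroup G} (φ : A ≃* B)

variable (A B) in
/-- The chain condition of `ReducedWord`: no letter `t ^ u * g` with `g ∈ toSubgroup A B u` is
followed by a letter `t ^ (-u) * g'`. -/
def ReducedRel (a b : ℤˣ × G) : Prop :=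
  a.2 ∈ toSubgroup A B a.1 → a.1 = b.1

theorem reducedRel_refl (p : ℤˣ × G) : ReducedRel A B p p := fun _ => rfl

theorem isChain_append_singleton_iff (l : List (ℤˣ × G)) (ε : ℤˣ) (g g' : G) :
    (l ++ [(ε, g)]).IsChain (ReducedRel A B) ↔ (l ++ [(ε, g')]).IsChain (ReducedRel A B) := by
  simp [List.isChain_append, ReducedRel]

def wordProd (l : List (ℤˣ × G)) : HNNExtension G A B φ :=
  (l.map fun p => t ^ (p.1 : ℤ) * of p.2).prod

@[simp]
theorem wordProd_nil : wordProd φ ([] : List (ℤˣ × G)) = 1 := rfl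

@[simp]
theorem wordProd_cons (p : ℤˣ × G) (l : List (ℤˣ × G)) :
    wordProd φ (p :: l) = t ^ (p.1 : ℤ) * of p.2 * wordProd φ l := by
  simp [wordProd]

@[simp]
theorem wordProd_append (l₁ l₂ : List (ℤˣ × G)) :
    wordProd φ (l₁ ++ l₂) = wordProd φ l₁ * wordProd φ l₂ := by
  simp [wordProd]

@[simp]
theorem wordProd_replicate (n : ℕ) (p : ℤˣ × G) :
    wordProd φ (List.replicate n p) = (t ^ (p.1 : ℤ) * of p.2) ^ n := by
  simp [wordProd]

theorem exists_isChain_eq_of_mul_wordProd (x : HNNExtension G A B φ) :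
    ∃ (h : G) (l : List (ℤˣ × G)), l.IsChain (ReducedRel A B) ∧ x = of h * wordProd φ l := by
  obtain ⟨d⟩ := TransversalPair.nonempty G A B
  let w : NormalWord d := x • empty
  have hw : w.prod φ = x := by simp [w, prod_smul, prod_empty]
  exact ⟨w.head, w.toList, w.chain, by rw [← hw]; rfl⟩

theorem length_eq_of_mul_wordProd_eq {h₁ h₂ : G} {l₁ l₂ : List (ℤˣ × G)}
    (hl₁ : l₁.IsChain (ReducedRel A B)) (hl₂ : l₂.IsChain (ReducedRel A B))
    (heq : of h₁ * wordProd φ l₁ = of h₂ * wordProd φ l₂) : l₁.length = l₂.length := by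
  simpa using congrArg List.length
    (ReducedWord.map_fst_eq_and_of_prod_eq φ (w₁ := ⟨h₁, l₁, hl₁⟩) (w₂ := ⟨h₂, l₂, hl₂⟩) heq).1

theorem wordProd_notMem_range {l : List (ℤˣ × G)} (hl : l.IsChain (ReducedRel A B))
    (hne : l ≠ []) : wordProd φ l ∉ (of : G →* HNNExtension G A B φ).range := fun hmem =>
  hne <| ReducedWord.toList_eq_nil_of_mem_of_range φ ⟨1, l, hl⟩ (by simpa [ReducedWord.prod])

theorem t_notMem_range : (t : HNNExtension G A B φ) ∉ (of : G →* _).range := by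
  simpa using wordProd_notMem_range φ (List.isChain_singleton ((1 : ℤˣ), (1 : G)))
    (List.cons_ne_nil _ _)

theorem t_mul_of_mul_inv_t_notMem_range {a : G} (ha : a ∉ A) :
    t * of a * t⁻¹ ∉ (of : G →* HNNExtension G A B φ).range := by
  have hl : [((1 : ℤˣ), a), (-1, 1)].IsChain (ReducedRel A B) :=
    List.isChain_pair.2 fun h => absurd h ha
  simpa [mul_assoc] using wordProd_notMem_range φ hl (List.cons_ne_nil _ _)

theorem infinite_conjugatesOf_wordProd_append_singleton {u ε : ℤˣ} {β g : G} {ys : List (ℤˣ × G)}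
    (hleft : ((u, β) :: (ys ++ [(ε, g)])).IsChain (ReducedRel A B))
    (hright : ReducedRel A B (ε, g * β⁻¹) (-u, β⁻¹)) :
    (conjugatesOf (wordProd φ (ys ++ [(ε, g)]))).Infinite := by
  let W (n : ℕ) : List (ℤˣ × G) :=
    List.replicate n (u, β) ++ (ys ++ (ε, g * β⁻¹) :: List.replicate n (-u, β⁻¹))
  have hW (n : ℕ) : (W n).IsChain (ReducedRel A B) := by
    refine List.isChain_replicate_append (reducedRel_refl _) ?_ n
    rw [← List.cons_append]
    refine List.isChain_append_cons_replicate (reducedRel_refl _) hright ?_ n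
    rwa [List.cons_append, ← List.cons_append, ← isChain_append_singleton_iff]
  let c (n : ℕ) : HNNExtension G A B φ := of β * (t ^ (u : ℤ) * of β) ^ n
  have hc (n : ℕ) : c n * wordProd φ (ys ++ [(ε, g)]) * (c n)⁻¹ = of β * wordProd φ (W n) := by
    have hinv : (((t : HNNExtension G A B φ) ^ (u : ℤ) * of β) ^ n)⁻¹ * (of β)⁻¹
        = of β⁻¹ * (t ^ (-(u : ℤ)) * of β⁻¹) ^ n := by
      rw [← inv_pow, mul_inv_rev, ← map_inv, zpow_neg, mul_pow_mul]
    simp only [c, W, wordProd_append, wordProd_replicate, wordProd_cons, wordProd_nil,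
      Units.val_neg, mul_inv_rev, map_mul, mul_one, mul_assoc, hinv]
  refine Set.infinite_of_injective_forall_mem (f := fun n => c n * wordProd φ _ * (c n)⁻¹)
    (fun m n hmn => ?_) (fun n => isConj_iff.2 ⟨c n, rfl⟩)
  have := length_eq_of_mul_wordProd_eq φ (hW m) (hW n) (by simpa only [hc] using hmn)
  simp only [W, List.length_append, List.length_replicate, List.length_cons] at this
  omega

theorem infinite_conjugatesOf_wordProd_of_head_fst_eq {u : ℤˣ} {b : G} (hb : b ∉ toSubgroup A B u)
    {l : List (ℤˣ × G)} (hl : l.IsChain (ReducedRel A B)) (hne : l ≠ [])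
    (hhead : ∀ p ∈ l.head?, p.1 = u) : (conjugatesOf (wordProd φ l)).Infinite := by
  obtain ⟨ys, ⟨ε, g⟩, rfl⟩ := (List.eq_nil_or_concat' l).resolve_left hne
  refine infinite_conjugatesOf_wordProd_append_singleton φ (β := b⁻¹ * g)
    (List.isChain_cons.2 ⟨fun p hp _ => (hhead p hp).symm, hl⟩) fun hmem => ?_
  rw [mul_inv_rev, inv_inv, mul_inv_cancel_left] at hmem
  by_contra hε
  rw [← Ne, Int.units_ne_iff_eq_neg, neg_neg] at hε
  exact hb (hε ▸ hmem)

theorem infinite_conjugatesOf_wordProd {u : ℤˣ} {b : G} (hb : b ∉ toSubgroup A B u)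
    {ys : List (ℤˣ × G)} {ε : ℤˣ} {g : G} (hl : (ys ++ [(ε, g)]).IsChain (ReducedRel A B)) :
    (conjugatesOf (wordProd φ (ys ++ [(ε, g)]))).Infinite := by
  by_cases hrot : ε = u ∧ g ∉ toSubgroup A B u
  · obtain ⟨rfl, hg⟩ := hrot
    have hconj : IsConj (wordProd φ (ys ++ [(ε, g)])) (wordProd φ ((ε, g) :: ys)) :=
      isConj_iff.2 ⟨t ^ (ε : ℤ) * of g, by simp [mul_assoc]⟩
    rw [hconj.conjugatesOf_eq]
    exact infinite_conjugatesOf_wordProd_of_head_fst_eq φ hb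
      (List.isChain_cons.2 ⟨fun _ _ h => absurd h hg, hl.left_of_append⟩) (List.cons_ne_nil _ _)
      (by simp)
  · refine infinite_conjugatesOf_wordProd_append_singleton φ (β := b)
      (List.isChain_cons.2 ⟨fun _ _ h => absurd h hb, hl⟩) fun hmem => ?_
    by_contra hε
    rw [← Ne, Int.units_ne_iff_eq_neg, neg_neg] at hε
    subst hε
    have hg : g ∈ toSubgroup A B ε := not_not.1 fun hg => hrot ⟨rfl, hg⟩
    exact hb (by simpa using mul_mem (inv_mem hmem) hg)

theorem infinite_conjugatesOf_of_notMem_range {u : ℤˣ} (hu : toSubgroup A B u ≠ ⊤)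
    {x : HNNExtension G A B φ} (hx : x ∉ (of : G →* HNNExtension G A B φ).range) :
    (conjugatesOf x).Infinite := by
  obtain ⟨b, hb⟩ := SetLike.exists_not_mem_of_ne_top _ hu rfl
  obtain ⟨h, l, hl, rfl⟩ := exists_isChain_eq_of_mul_wordProd φ x
  obtain ⟨ys, ⟨ε, g⟩, rfl⟩ := (List.eq_nil_or_concat' l).resolve_left <| by
    rintro rfl
    exact hx ⟨h, by simp⟩
  have hconj : IsConj (of h * wordProd φ (ys ++ [(ε, g)])) (wordProd φ (ys ++ [(ε, g * h)])) :=
    isConj_iff.2 ⟨(of h)⁻¹, by simp [mul_assoc]⟩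
  rw [hconj.conjugatesOf_eq]
  exact infinite_conjugatesOf_wordProd φ hb ((isChain_append_singleton_iff _ _ _ _).1 hl)

theorem comap_of_le_of_le_range {N : Subgroup (HNNExtension G A B φ)} [N.Normal]
    (hN : N ≤ (of : G →* HNNExtension G A B φ).range) : N.comap of ≤ A := fun a ha => by
  by_contra haA
  exact t_mul_of_mul_inv_t_notMem_range φ haA (hN (Subgroup.Normal.conj_mem ‹N.Normal› _ ha t))

theorem fcCenter_le_range {u : ℤˣ} (hu : toSubgroup A B u ≠ ⊤) :
    fcCenter (HNNExtension G A B φ) ≤ (of : G →* HNNExtension G A B φ).range := fun x hx => by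
  by_contra hxr
  exact infinite_conjugatesOf_of_notMem_range φ hu hxr hx

theorem infinite {u : ℤˣ} (hu : toSubgroup A B u ≠ ⊤) : Infinite (HNNExtension G A B φ) :=
  Set.infinite_univ_iff.1 <|
    (infinite_conjugatesOf_of_notMem_range φ hu (t_notMem_range φ)).mono (Set.subset_univ _)

end HNNExtension

/-- Let `Γ₀` and `Γ₀'` be subgroups of a group `Γ₁`, at least one of which is proper,
let `φ : Γ₀ ≃* Γ₀'` be an isomorphism and let `Γ` be the corresponding HNN extension.
Assume that every finitely generated nontrivial subgroup of `Γ₀` whose image in `Γ`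
(under the canonical embedding `Γ₁ → Γ`) is normal in `Γ` is ICC.  Then `Γ` is ICC. -/
theorem isICC_HNNExtension_of_normal_subgroups_isICC {Γ₁ : Type*} [Group Γ₁]
    (Γ₀ Γ₀' : Subgroup Γ₁) (hproper : Γ₀ ≠ ⊤ ∨ Γ₀' ≠ ⊤) (φ : Γ₀ ≃* Γ₀')
    (h : ∀ H : Subgroup Γ₁, H ≤ Γ₀ → H.FG → H ≠ ⊥ →
      (H.map (HNNExtension.of : Γ₁ →* HNNExtension Γ₁ Γ₀ Γ₀' φ)).Normal → IsICC H) :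
    IsICC (HNNExtension Γ₁ Γ₀ Γ₀' φ) := by
  obtain ⟨u, hu⟩ : ∃ u : ℤˣ, HNNExtension.toSubgroup Γ₀ Γ₀' u ≠ ⊤ :=
    hproper.elim (fun h => ⟨1, h⟩) (fun h => ⟨-1, by rwa [HNNExtension.toSubgroup_neg_one]⟩)
  refine ⟨HNNExtension.infinite φ hu, fun g hg hfin => ?_⟩
  set N := Subgroup.normalClosure {g}
  have hN : N ≤ (HNNExtension.of : Γ₁ →* HNNExtension Γ₁ Γ₀ Γ₀' φ).range :=
    (Subgroup.normalClosure_le_normal (Set.singleton_subset_iff.2 hfin)).trans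
      (HNNExtension.fcCenter_le_range φ hu)
  obtain ⟨a, rfl⟩ := hN (Subgroup.subset_normalClosure rfl)
  set H := N.comap HNNExtension.of
  have hmap : H.map HNNExtension.of = N := Subgroup.map_comap_eq_self hN
  have ha : a ∈ H := Subgroup.subset_normalClosure rfl
  have ha1 : (⟨a, ha⟩ : H) ≠ 1 := fun h1 => hg <| by
    rw [show a = 1 from congrArg Subtype.val h1, map_one]
  have hICC := h H (HNNExtension.comap_of_le_of_le_range φ hN)
    (.of_map_of_injective (HNNExtension.of_injective φ) (hmap ▸ .normalClosure_singleton hfin))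
    (Subgroup.ne_bot_iff_exists_ne_one.2 ⟨_, ha1⟩) (hmap ▸ Subgroup.normalClosure_normal)
  exact (hICC.2 _ ha1).conjugatesOf_map (f := HNNExtension.of.comp H.subtype)
    ((HNNExtension.of_injective φ).comp Subtype.val_injective) hfin
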